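/- Every solved basic formula is satisfiable in the structure 𝒯 of trees. -/

import Mathlib

set_option linter.unusedVariables false


/-- A many-sorted signature: sorts and generators (function symbols),
each generator `g` having argument sorts `src g` and target sort `tgt g`. -/
structure Sig where
  Srt : Type
  Gen : Type
  tgt : Gen → Srt
  src : Gen → List Srt

namespace Sig

variable (σ : Sig)

/-- The generators of a sort `s`. -/
def Gens (s : σ.Srt) : Set σ.Gen := { g | σ.tgt g = s }

/-- A labeling of positions (lists of natural numbers) by generators is a valid
tree labeling if children exist exactly according to arity and have the right sorts. -/
def IsLabeling (L : List ℕ → Option σ.Gen) : Prop :=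
  (∀ p, L p = none → ∀ i, L (p ++ [i]) = none) ∧
  (∀ p g, L p = some g → ∀ i, ((L (p ++ [i])).isSome ↔ i < (σ.src g).length)) ∧
  (∀ p g i g', L p = some g → L (p ++ [i]) = some g' →
      (σ.src g)[i]? = some (σ.tgt g'))

/-- A (possibly infinite) tree of sort `s`. -/
structure Tree (s : σ.Srt) where
  L : List ℕ → Option σ.Gen
  isLab : σ.IsLabeling L
  root : ∃ g, L [] = some g ∧ σ.tgt g = s

variable {σ}

/-- A tree is finite if it has finitely many nodes. -/
def Tree.IsFinite {s : σ.Srt} (t : σ.Tree s) : Prop :=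
  { p : List ℕ | (t.L p).isSome }.Finite

/-- The tree has depth at most `d`. -/
def Tree.DepthLE {s : σ.Srt} (t : σ.Tree s) (d : ℕ) : Prop :=
  ∀ p, (t.L p).isSome → p.length ≤ d

variable (σ)

/-- Build a tree with root labeled `g` from given immediate subtrees. -/
def build (g : σ.Gen) (c : ∀ i : Fin (σ.src g).length, σ.Tree ((σ.src g).get i)) :
    σ.Tree (σ.tgt g) where
  L := fun p =>
    match p with
    | [] => some g
    | i :: q => if h : i < (σ.src g).length then (c ⟨i, h⟩).L q else none
  isLab := by
    refine ⟨?_, ?_, ?_⟩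
    · intro p hp i
      match p with
      | [] => simp at hp
      | j :: q =>
        simp only [List.cons_append]
        by_cases h : j < (σ.src g).length
        · simp only [dif_pos h] at hp ⊢
          exact (c ⟨j, h⟩).isLab.1 q hp i
        · simp only [dif_neg h]
    · intro p g' hp i
      match p with
      | [] =>
        injection hp with hg
        subst hg
        by_cases h : i < (σ.src g).length
        · simp only [List.nil_append, dif_pos h]
          obtain ⟨g₀, h₀, -⟩ := (c ⟨i, h⟩).root
          simp [h₀, h]
        · simp [List.nil_append, dif_neg h, h]
      | j :: q =>
        by_cases h : j < (σ.src g).length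
        · simp only [dif_pos h] at hp
          simp only [List.cons_append, dif_pos h]
          exact (c ⟨j, h⟩).isLab.2.1 q g' hp i
        · simp only [dif_neg h] at hp
          cases hp
    · intro p g' i g'' hp hpi
      match p with
      | [] =>
        injection hp with hg
        subst hg
        by_cases h : i < (σ.src g).length
        · simp only [List.nil_append, dif_pos h] at hpi
          obtain ⟨g₀, h₀, htgt⟩ := (c ⟨i, h⟩).root
          rw [h₀, Option.some.injEq] at hpi
          subst hpi
          rw [List.getElem?_eq_getElem h]
          exact congrArg some htgt.symm
        · simp only [List.nil_append, dif_neg h] at hpi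
          cases hpi
      | j :: q =>
        by_cases h : j < (σ.src g).length
        · simp only [dif_pos h] at hp
          simp only [List.cons_append, dif_pos h] at hpi
          exact (c ⟨j, h⟩).isLab.2.2 q g' i g'' hp hpi
        · simp only [dif_neg h] at hp
          cases hp
  root := ⟨g, rfl, rfl⟩

/-- Sorts with no infinite trees. -/
def S0I : Set σ.Srt := { s | ∀ t : σ.Tree s, t.IsFinite }
/-- Sorts with no finite trees. -/
def S0F : Set σ.Srt := { s | ∀ t : σ.Tree s, ¬ t.IsFinite }
/-- Sorts with only finitely many finite trees. -/
def SFF : Set σ.Srt := { s | { t : σ.Tree s | t.IsFinite }.Finite }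
/-- Sorts with only finitely many infinite trees. -/
def SFI : Set σ.Srt := { s | { t : σ.Tree s | ¬ t.IsFinite }.Finite }
/-- Sorts with exactly one infinite tree. -/
def S1I : Set σ.Srt := { s | ∃! t : σ.Tree s, ¬ t.IsFinite }

/-- Terms of the (extended) first-order language of trees. Variables are
pairs of a sort and a number. -/
inductive Tm : σ.Srt → Type
  | var (s : σ.Srt) (n : ℕ) : Tm s
  | app (g : σ.Gen) (args : ∀ i : Fin (σ.src g).length, Tm ((σ.src g).get i)) :
      Tm (σ.tgt g)

/-- Valuations assign trees to (sorted) variables. -/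
def Val := ∀ s : σ.Srt, ℕ → σ.Tree s

variable {σ}

/-- Evaluation of a term in the structure of trees under a valuation. -/
def Tm.eval (ρ : σ.Val) : ∀ {s : σ.Srt}, σ.Tm s → σ.Tree s
  | _, .var s n => ρ s n
  | _, .app g args => σ.build g (fun i => (args i).eval ρ)

/-- The (sorted) free variables of a term. -/
def Tm.fv : ∀ {s : σ.Srt}, σ.Tm s → Set ((s : σ.Srt) × ℕ)
  | _, .var s n => {⟨s, n⟩}
  | _, .app _ args => ⋃ i, (args i).fv

/-- A term is flat if it is a variable or a generator applied to variables. -/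
def Tm.IsFlat : ∀ {s : σ.Srt}, σ.Tm s → Prop
  | _, .var _ _ => True
  | _, .app g args => ∀ i : Fin (σ.src g).length, ∃ n, args i = Tm.var ((σ.src g).get i) n

/-- A term of the form `f(z̄)`. -/
def Tm.IsApp : ∀ {s : σ.Srt}, σ.Tm s → Prop
  | _, .var _ _ => False
  | _, .app _ _ => True

open Classical in
/-- Update a valuation at one sorted variable. -/
noncomputable def updV (ρ : σ.Val) (s : σ.Srt) (n : ℕ) (t : σ.Tree s) : σ.Val :=
  fun s' m =>
    if h : s' = s then
      (if m = n then cast (congrArg σ.Tree h.symm) t else ρ s' m)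
    else ρ s' m

variable (σ)

/-- Formulae of the extended first-order language of trees: equality,
the finiteness predicates `fin`, propositional connectives and sorted quantifiers. -/
inductive Fml : Type
  | tru : Fml
  | fls : Fml
  | eq {s : σ.Srt} (a b : σ.Tm s) : Fml
  | fin {s : σ.Srt} (a : σ.Tm s) : Fml
  | not (φ : Fml) : Fml
  | and (φ ψ : Fml) : Fml
  | or (φ ψ : Fml) : Fml
  | imp (φ ψ : Fml) : Fml
  | ex (s : σ.Srt) (n : ℕ) (φ : Fml) : Fml
  | all (s : σ.Srt) (n : ℕ) (φ : Fml) : Fml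

variable {σ}

/-- Satisfaction of a formula in the structure `𝒯` of trees under a valuation. -/
def Fml.Sat (ρ : σ.Val) : σ.Fml → Prop
  | .tru => True
  | .fls => False
  | .eq a b => a.eval ρ = b.eval ρ
  | .fin a => (a.eval ρ).IsFinite
  | .not φ => ¬ φ.Sat ρ
  | .and φ ψ => φ.Sat ρ ∧ ψ.Sat ρ
  | .or φ ψ => φ.Sat ρ ∨ ψ.Sat ρ
  | .imp φ ψ => φ.Sat ρ → ψ.Sat ρ
  | .ex s n φ => ∃ t : σ.Tree s, φ.Sat (updV ρ s n t)
  | .all s n φ => ∀ t : σ.Tree s, φ.Sat (updV ρ s n t)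

/-- The free variables of a formula. -/
def Fml.fv : σ.Fml → Set ((s : σ.Srt) × ℕ)
  | .tru => ∅
  | .fls => ∅
  | .eq a b => a.fv ∪ b.fv
  | .fin a => a.fv
  | .not φ => φ.fv
  | .and φ ψ => φ.fv ∪ ψ.fv
  | .or φ ψ => φ.fv ∪ ψ.fv
  | .imp φ ψ => φ.fv ∪ ψ.fv
  | .ex s n φ => φ.fv \ {⟨s, n⟩}
  | .all s n φ => φ.fv \ {⟨s, n⟩}

/-- Two formulae are equivalent in the extended theory of trees if they are
satisfied by exactly the same valuations. -/
def FmlEquiv (φ ψ : σ.Fml) : Prop := ∀ ρ : σ.Val, φ.Sat ρ ↔ ψ.Sat ρ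


variable (σ)

/-- A basic formula: a conjunction of equations `v = t` (with `t` a flat term)
and finiteness constraints `fin(u)`, represented by the list of equations
(a sort, the left-hand-side variable, the right-hand-side term) and the list of
`fin`-variables. -/
structure Basic where
  eqs : List ((s : σ.Srt) × ℕ × σ.Tm s)
  fins : List ((s : σ.Srt) × ℕ)

variable {σ}

/-- Well-formedness of a basic formula: all right-hand sides are flat. -/
def Basic.WF (β : σ.Basic) : Prop := ∀ e ∈ β.eqs, (e.2.2).IsFlat

/-- Satisfaction of a basic formula under a valuation. -/
def Basic.Sat (β : σ.Basic) (ρ : σ.Val) : Prop :=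
  (∀ e ∈ β.eqs, ρ e.1 e.2.1 = (e.2.2).eval ρ) ∧
  (∀ u ∈ β.fins, (ρ u.1 u.2).IsFinite)

/-- The variables occurring in a basic formula. -/
def Basic.vars (β : σ.Basic) : Set ((s : σ.Srt) × ℕ) :=
  { x | (∃ e ∈ β.eqs, (⟨e.1, e.2.1⟩ : (s : σ.Srt) × ℕ) = x ∨ x ∈ (e.2.2).fv) ∨ x ∈ β.fins }

/-- One step of reachability: `y` occurs in the right-hand side of an equation
whose left-hand side is `x`. -/
def Basic.step (β : σ.Basic) (x y : (s : σ.Srt) × ℕ) : Prop :=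
  ∃ e ∈ β.eqs, (⟨e.1, e.2.1⟩ : (s : σ.Srt) × ℕ) = x ∧ y ∈ (e.2.2).fv

/-- `y` is reachable from `x` (by a chain of equations, possibly empty). -/
def Basic.Reach (β : σ.Basic) (x y : (s : σ.Srt) × ℕ) : Prop :=
  Relation.ReflTransGen β.step x y

/-- `y` is properly reachable from `x` (by a nonempty chain of equations). -/
def Basic.ProperReach (β : σ.Basic) (x y : (s : σ.Srt) × ℕ) : Prop :=
  Relation.TransGen β.step x y

open Classical in
/-- The index of an element in a list (used to compare variables in a given ordering). -/
noncomputable def idx {A : Type*} (vs : List A) (x : A) : ℕ :=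
  vs.findIdx fun y => decide (y = x)

/-- `x` is smaller than `y` in the variable ordering given by the list `vs`. -/
noncomputable def ltv {A : Type*} (vs : List A) (x y : A) : Prop :=
  idx vs x < idx vs y

/-- A basic formula is solved with respect to the variable ordering `vs`:
(1) the left-hand-side variables of equations and the `fin`-variables are
pairwise distinct and every equation `x = y` between variables has `x > y`;
(2) `fin(v)` occurs only if the sort of `v` has both finite and infinite trees. -/
noncomputable def Solved (vs : List ((s : σ.Srt) × ℕ)) (β : σ.Basic) : Prop :=
  ((β.eqs.map fun e => (⟨e.1, e.2.1⟩ : (s : σ.Srt) × ℕ)) ++ β.fins).Nodup ∧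
  (∀ e ∈ β.eqs, ∀ n : ℕ, e.2.2 = Sig.Tm.var e.1 n →
      ltv vs (⟨e.1, n⟩ : (s : σ.Srt) × ℕ) ⟨e.1, e.2.1⟩) ∧
  (∀ u ∈ β.fins, (∃ t : σ.Tree u.1, t.IsFinite) ∧ (∃ t : σ.Tree u.1, ¬ t.IsFinite))

/-- `ρ'` agrees with `ρ` outside the set `V` of variables. -/
def AgreesOff (ρ ρ' : σ.Val) (V : Set ((s : σ.Srt) × ℕ)) : Prop :=
  ∀ (s : σ.Srt) (n : ℕ), (⟨s, n⟩ : (s : σ.Srt) × ℕ) ∉ V → ρ' s n = ρ s n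

variable (σ)

/-- A normal formula of depth at most 2,
`¬(∃x̄. α ∧ ⋀ᵢ ¬(∃ȳᵢ. βᵢ))`, given by the bound variables `x̄`,
the basic formula `α` and the list of pairs `(ȳᵢ, βᵢ)`. -/
structure NF2 where
  xs : List ((s : σ.Srt) × ℕ)
  base : σ.Basic
  inner : List (List ((s : σ.Srt) × ℕ) × σ.Basic)

variable {σ}

/-- Well-formedness of the basic subformulae of a normal formula of depth ≤ 2. -/
def NF2.WF (φ : σ.NF2) : Prop := φ.base.WF ∧ ∀ p ∈ φ.inner, (p.2).WF

/-- Satisfaction of the inner part `∃x̄. α ∧ ⋀ᵢ ¬(∃ȳᵢ. βᵢ)` of a normal formula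
of depth ≤ 2 (this is the shape of a fully simplified formula). -/
def NF2.PosSat (φ : σ.NF2) (ρ : σ.Val) : Prop :=
  ∃ ρ₁ : σ.Val, AgreesOff ρ ρ₁ { x | x ∈ φ.xs } ∧ φ.base.Sat ρ₁ ∧
    ∀ p ∈ φ.inner, ¬ ∃ ρ₂ : σ.Val, AgreesOff ρ₁ ρ₂ { x | x ∈ p.1 } ∧ (p.2).Sat ρ₂

/-- Satisfaction of a normal formula `¬(∃x̄. α ∧ ⋀ᵢ ¬(∃ȳᵢ. βᵢ))` of depth ≤ 2. -/
def NF2.Sat (φ : σ.NF2) (ρ : σ.Val) : Prop := ¬ φ.PosSat ρ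

/-- The free variables of a normal formula of depth ≤ 2. -/
def NF2.fv (φ : σ.NF2) : Set ((s : σ.Srt) × ℕ) :=
  (φ.base.vars \ { x | x ∈ φ.xs }) ∪
    { x | ∃ p ∈ φ.inner, x ∈ (p.2).vars ∧ x ∉ φ.xs ∧ x ∉ p.1 }

/-- All variables occurring (bound or free) in a normal formula of depth ≤ 2. -/
def NF2.allVars (φ : σ.NF2) : Set ((s : σ.Srt) × ℕ) :=
  φ.base.vars ∪ { x | x ∈ φ.xs } ∪ { x | ∃ p ∈ φ.inner, x ∈ p.1 ∨ x ∈ (p.2).vars }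

open Classical in
/-- `β` with all conjuncts also occurring in `α` removed (written `β*`). -/
noncomputable def bstar (α β : σ.Basic) : σ.Basic where
  eqs := β.eqs.filter fun e => decide (e ∉ α.eqs)
  fins := β.fins.filter fun u => decide (u ∉ α.fins)

/-- `β` contains an equation `u = f(w̄)`. -/
def HasEqApp (β : σ.Basic) (u : (s : σ.Srt) × ℕ) : Prop :=
  ∃ e ∈ β.eqs, (⟨e.1, e.2.1⟩ : (s : σ.Srt) × ℕ) = u ∧ (e.2.2).IsApp

/-- `α` contains an equation with left-hand side `u`. -/
def HasLhs (α : σ.Basic) (u : (s : σ.Srt) × ℕ) : Prop :=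
  ∃ e ∈ α.eqs, (⟨e.1, e.2.1⟩ : (s : σ.Srt) × ℕ) = u

/-- Definition of an instantiable variable of a normal formula
`¬(∃x̄. α ∧ ⋀ᵢ ¬(∃ȳᵢ. βᵢ))` of depth at most 2 (Definition of the paper):
`u` is free or among `x̄` and one of the four conditions holds. -/
def NF2.Instantiable (φ : σ.NF2) (u : (s : σ.Srt) × ℕ) : Prop :=
  (u ∈ φ.fv ∨ u ∈ φ.xs) ∧
  ( ((σ.Gens u.1).Finite ∧ ∃ p ∈ φ.inner,
        HasEqApp (bstar φ.base p.2) u ∧ ¬ (p.2).ProperReach u u)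
  ∨ (u.1 ∈ σ.SFF ∩ σ.SFI ∧ (∃ p ∈ φ.inner, u ∈ (bstar φ.base p.2).vars) ∧
        ¬ HasLhs φ.base u)
  ∨ (u.1 ∈ σ.SFF ∧ u ∈ φ.base.fins ∧ ∃ p ∈ φ.inner, u ∈ (bstar φ.base p.2).vars)
  ∨ (u.1 ∈ σ.SFI ∧ ∃ p ∈ φ.inner,
        (bstar φ.base p.2).eqs = [] ∧ u ∈ (bstar φ.base p.2).fins) )

/-- A normal formula of depth at most 2 is solved (conditions (1)–(5) of the paper):
its basic subformulae are solved with respect to an ordering compatible with binding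
depth, the equations of `α` are included in each `βᵢ`, each `βᵢ` has a conjunct not
in `α`, no variable is instantiable, and all bound variables are reachable from
the free variables of the respective subformula. -/
noncomputable def NF2.IsSolved (φ : σ.NF2) : Prop :=
  (∃ vs : List ((s : σ.Srt) × ℕ), vs.Nodup ∧
    (∀ x ∈ φ.allVars, x ∈ vs) ∧
    (∀ a ∈ φ.fv, ∀ b ∈ φ.xs, ltv vs a b) ∧
    (∀ p ∈ φ.inner, ∀ b ∈ φ.xs, ∀ c ∈ p.1, ltv vs b c) ∧
    (∀ p ∈ φ.inner, ∀ a ∈ φ.fv, ∀ c ∈ p.1, ltv vs a c) ∧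
    Solved vs φ.base ∧ ∀ p ∈ φ.inner, Solved vs p.2) ∧
  (∀ p ∈ φ.inner, ∀ e ∈ φ.base.eqs, e ∈ (p.2).eqs) ∧
  (∀ p ∈ φ.inner, (∃ e ∈ (p.2).eqs, e ∉ φ.base.eqs) ∨ (∃ u ∈ (p.2).fins, u ∉ φ.base.fins)) ∧
  (∀ u : (s : σ.Srt) × ℕ, ¬ φ.Instantiable u) ∧
  (∀ x ∈ φ.xs, ∃ v, v ∈ φ.base.vars ∧ v ∉ φ.xs ∧ φ.base.Reach v x) ∧
  (∀ p ∈ φ.inner, ∀ y ∈ p.1, ∃ v, v ∈ (p.2).vars ∧ v ∉ p.1 ∧ (p.2).Reach v y)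

end Sig

/-!
Following a chain of equations between variables, each of which decreases in the variable
order, every variable reaches either an equation `x = f(z̄)` or a variable without equation.
A variable of the second kind is left free and given a finite tree whenever its sort has one;
this covers every `fin`-variable, which heads no equation and whose sort has finite trees.
The equations `x = f(z̄)` then form a guarded system, which always has a (possibly infinite)
solution: the label at a path is computed by recursion on the path.
-/

namespace Sig

variable {σ : Sig}

theorem Tree.ext {s : σ.Srt} {t t' : σ.Tree s} (h : t.L = t'.L) : t = t' := by
  cases t; cases t'; cases h; rfl

variable (σ) in
/-- The right-hand side of an unknown in a guarded system of tree equations: either the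
labeling of a given tree, or a generator applied to further unknowns. -/
inductive Node (X : Type*)
  | ext (L : List ℕ → Option σ.Gen)
  | app (g : σ.Gen) (kids : Fin (σ.src g).length → X)

section Unfold

variable {X : Type*} {srt : X → σ.Srt} {δ : X → σ.Node X}

def Node.WellSorted (srt : X → σ.Srt) (s : σ.Srt) : σ.Node X → Prop
  | .ext L => ∃ t : σ.Tree s, t.L = L
  | .app g kids => σ.tgt g = s ∧ ∀ i, srt (kids i) = (σ.src g).get i

def unfoldL (δ : X → σ.Node X) : X → List ℕ → Option σ.Gen
  | x, [] =>
    match δ x with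
    | .ext L => L []
    | .app g _ => some g
  | x, i :: q =>
    match δ x with
    | .ext L => L (i :: q)
    | .app g kids => if h : i < (σ.src g).length then unfoldL δ (kids ⟨i, h⟩) q else none

theorem unfoldL_of_ext {x : X} {L : List ℕ → Option σ.Gen} (h : δ x = .ext L) :
    unfoldL δ x = L := by
  funext p
  cases p <;> simp only [unfoldL, h]

theorem unfoldL_of_app_nil {x : X} {g kids} (h : δ x = .app g kids) :
    unfoldL δ x [] = some g := by
  simp only [unfoldL, h]

theorem unfoldL_of_app_cons {x : X} {g kids} (h : δ x = .app g kids) (i : ℕ) (q : List ℕ) :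
    unfoldL δ x (i :: q) =
      if h : i < (σ.src g).length then unfoldL δ (kids ⟨i, h⟩) q else none := by
  simp only [unfoldL, h]

theorem unfoldL_congr {x y : X} (h : δ x = δ y) : unfoldL δ x = unfoldL δ y := by
  funext p
  cases p <;> simp only [unfoldL, h]

variable (hδ : ∀ x, (δ x).WellSorted srt (srt x))
include hδ

theorem exists_tree_of_ext {x : X} {L : List ℕ → Option σ.Gen} (h : δ x = .ext L) :
    ∃ t : σ.Tree (srt x), unfoldL δ x = t.L := by
  have hx := hδ x
  rw [h] at hx
  obtain ⟨t, rfl⟩ := hx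
  exact ⟨t, unfoldL_of_ext h⟩

theorem unfoldL_root (x : X) : ∃ g, unfoldL δ x [] = some g ∧ σ.tgt g = srt x := by
  rcases h : δ x with L | ⟨g, kids⟩
  · obtain ⟨t, ht⟩ := exists_tree_of_ext hδ h
    exact ht ▸ t.root
  · have hx := hδ x
    rw [h] at hx
    exact ⟨g, unfoldL_of_app_nil h, hx.1⟩

theorem unfoldL_append_eq_none (x : X) (p : List ℕ) (hp : unfoldL δ x p = none) (i : ℕ) :
    unfoldL δ x (p ++ [i]) = none := by
  rcases h : δ x with L | ⟨g, kids⟩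
  · obtain ⟨t, ht⟩ := exists_tree_of_ext hδ h
    rw [ht] at hp ⊢
    exact t.isLab.1 p hp i
  cases p with
  | nil => simp [unfoldL_of_app_nil h] at hp
  | cons j q =>
    rw [unfoldL_of_app_cons h] at hp
    rw [List.cons_append, unfoldL_of_app_cons h]
    split at hp
    · next hj => rw [dif_pos hj]; exact unfoldL_append_eq_none _ q hp i
    · next hj => rw [dif_neg hj]

theorem isSome_unfoldL_append_iff (x : X) (p : List ℕ) (g : σ.Gen)
    (hp : unfoldL δ x p = some g) (i : ℕ) :
    (unfoldL δ x (p ++ [i])).isSome ↔ i < (σ.src g).length := by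
  rcases h : δ x with L | ⟨g₀, kids⟩
  · obtain ⟨t, ht⟩ := exists_tree_of_ext hδ h
    rw [ht] at hp ⊢
    exact t.isLab.2.1 p g hp i
  cases p with
  | nil =>
    rw [unfoldL_of_app_nil h, Option.some.injEq] at hp
    subst hp
    rw [List.nil_append, unfoldL_of_app_cons h]
    split
    · next hi =>
      obtain ⟨g', hg', -⟩ := unfoldL_root hδ (kids ⟨i, hi⟩)
      simp only [hg', Option.isSome_some, hi]
    · next hi => simp only [Option.isSome_none, Bool.false_eq_true, hi]
  | cons j q =>
    rw [unfoldL_of_app_cons h] at hp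
    rw [List.cons_append, unfoldL_of_app_cons h]
    split at hp
    · next hj => rw [dif_pos hj]; exact isSome_unfoldL_append_iff _ q g hp i
    · cases hp

theorem src_getElem?_of_unfoldL (x : X) (p : List ℕ) (g : σ.Gen) (i : ℕ) (g' : σ.Gen)
    (hp : unfoldL δ x p = some g) (hpi : unfoldL δ x (p ++ [i]) = some g') :
    (σ.src g)[i]? = some (σ.tgt g') := by
  rcases h : δ x with L | ⟨g₀, kids⟩
  · obtain ⟨t, ht⟩ := exists_tree_of_ext hδ h
    rw [ht] at hp hpi
    exact t.isLab.2.2 p g i g' hp hpi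
  cases p with
  | nil =>
    rw [unfoldL_of_app_nil h, Option.some.injEq] at hp
    subst hp
    rw [List.nil_append, unfoldL_of_app_cons h] at hpi
    split at hpi
    · next hi =>
      obtain ⟨g'', hg'', hsrt⟩ := unfoldL_root hδ (kids ⟨i, hi⟩)
      rw [hg'', Option.some.injEq] at hpi
      subst hpi
      have hx := hδ x
      rw [h] at hx
      rw [List.getElem?_eq_getElem hi, hsrt, hx.2]
      rfl
    · cases hpi
  | cons j q =>
    rw [unfoldL_of_app_cons h] at hp
    rw [List.cons_append, unfoldL_of_app_cons h] at hpi
    split at hp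
    · next hj => rw [dif_pos hj] at hpi; exact src_getElem?_of_unfoldL _ q g i g' hp hpi
    · cases hp

/-- The solution of a well-sorted guarded system at the unknown `x`. -/
def unfold (x : X) : σ.Tree (srt x) where
  L := unfoldL δ x
  isLab := ⟨unfoldL_append_eq_none hδ x, isSome_unfoldL_append_iff hδ x,
    src_getElem?_of_unfoldL hδ x⟩
  root := unfoldL_root hδ x

end Unfold

theorem nonempty_tree (hne : ∀ s : σ.Srt, (σ.Gens s).Nonempty) (s : σ.Srt) :
    Nonempty (σ.Tree s) :=
  ⟨unfold (srt := id) (δ := fun s => .app (hne s).choose fun i => (σ.src _).get i)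
    (fun s => ⟨(hne s).choose_spec, fun _ => rfl⟩) s⟩

/-- A finite tree of sort `s` if there is one, an arbitrary tree otherwise. -/
noncomputable def preferFinite (hne : ∀ s : σ.Srt, (σ.Gens s).Nonempty) (s : σ.Srt) :
    σ.Tree s :=
  @Classical.epsilon _ (nonempty_tree hne s) Tree.IsFinite

theorem preferFinite_isFinite (hne : ∀ s : σ.Srt, (σ.Gens s).Nonempty) {s : σ.Srt}
    (h : ∃ t : σ.Tree s, t.IsFinite) : (preferFinite hne s).IsFinite :=
  Classical.epsilon_spec h

variable (σ) in
/-- The sort-free data of a flat term, so that right-hand sides of equations of different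
sorts can be compared without casts. -/
inductive FlatShape
  | var (n : ℕ)
  | app (g : σ.Gen) (kids : Fin (σ.src g).length → ℕ)

/-- The index of a variable (junk `0` for an application). -/
def Tm.varIdx : ∀ {s : σ.Srt}, σ.Tm s → ℕ
  | _, .var _ n => n
  | _, .app _ _ => 0

def Tm.shape : ∀ {s : σ.Srt}, σ.Tm s → σ.FlatShape
  | _, .var _ n => .var n
  | _, .app g args => .app g fun i => (args i).varIdx

theorem Tm.eq_var_of_shape_eq {s : σ.Srt} {t : σ.Tm s} {n : ℕ} (h : t.shape = .var n) :
    t = .var s n := by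
  cases t with
  | var => cases h; rfl
  | app => cases h

theorem Tm.sort_eq_of_shape_eq {s : σ.Srt} {t : σ.Tm s} {g : σ.Gen} {kids}
    (h : t.shape = .app g kids) : s = σ.tgt g := by
  cases t with
  | var => cases h
  | app => cases h; rfl

theorem Tm.eval_L_of_shape_eq {s : σ.Srt} {t : σ.Tm s} {g : σ.Gen} {kids}
    (h : t.shape = .app g kids) (hf : t.IsFlat) (ρ : σ.Val) :
    (t.eval ρ).L = (σ.build g fun i => ρ ((σ.src g).get i) (kids i)).L := by
  cases t with
  | var => cases h
  | app g args =>
    cases h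
    have hargs : (fun i => (args i).eval ρ) = fun i => ρ _ (args i).varIdx := by
      funext i
      obtain ⟨n, hn⟩ := hf i
      rw [hn]
      rfl
    change (σ.build g _).L = _
    rw [hargs]

open Classical in
noncomputable def Basic.rhs (β : σ.Basic) (x : (s : σ.Srt) × ℕ) : Option σ.FlatShape :=
  if h : ∃ e ∈ β.eqs, (⟨e.1, e.2.1⟩ : (s : σ.Srt) × ℕ) = x then
    some h.choose.2.2.shape
  else none

section Basic

variable {β : σ.Basic}

theorem Basic.exists_eq_of_rhs_eq_some {x : (s : σ.Srt) × ℕ} {sh : σ.FlatShape}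
    (h : β.rhs x = some sh) :
    ∃ e ∈ β.eqs, (⟨e.1, e.2.1⟩ : (s : σ.Srt) × ℕ) = x ∧ e.2.2.shape = sh := by
  unfold rhs at h
  split at h
  · next hex =>
    obtain ⟨he, hx⟩ := hex.choose_spec
    exact ⟨hex.choose, he, hx, Option.some.inj h⟩
  · cases h

theorem Basic.rhs_of_mem
    (hnd : (β.eqs.map fun e => (⟨e.1, e.2.1⟩ : (s : σ.Srt) × ℕ)).Nodup)
    {e : (s : σ.Srt) × ℕ × σ.Tm s} (he : e ∈ β.eqs) :
    β.rhs ⟨e.1, e.2.1⟩ = some e.2.2.shape := by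
  have hex : ∃ e' ∈ β.eqs, (⟨e'.1, e'.2.1⟩ : (s : σ.Srt) × ℕ) = ⟨e.1, e.2.1⟩ :=
    ⟨e, he, rfl⟩
  obtain ⟨he', hx⟩ := hex.choose_spec
  rw [rhs, dif_pos hex, List.inj_on_of_nodup_map hnd he' he hx]

theorem Basic.rhs_eq_none {u : (s : σ.Srt) × ℕ}
    (hu : u ∉ β.eqs.map fun e => (⟨e.1, e.2.1⟩ : (s : σ.Srt) × ℕ)) : β.rhs u = none := by
  rw [rhs, dif_neg]
  rintro ⟨e, he, rfl⟩
  exact hu (List.mem_map_of_mem he)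

theorem Basic.sort_eq_of_rhs_eq_app (hwf : β.WF) {x : (s : σ.Srt) × ℕ} {g kids}
    (h : β.rhs x = some (.app g kids)) : x.1 = σ.tgt g := by
  obtain ⟨e, he, rfl, hsh⟩ := Basic.exists_eq_of_rhs_eq_some h
  exact Tm.sort_eq_of_shape_eq hsh

variable {vs : List ((s : σ.Srt) × ℕ)} (hne : ∀ s : σ.Srt, (σ.Gens s).Nonempty)

theorem Solved.idx_lt_of_rhs_eq_var (hsol : Solved vs β) {x : (s : σ.Srt) × ℕ} {n : ℕ}
    (h : β.rhs x = some (.var n)) : idx vs ⟨x.1, n⟩ < idx vs x := by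
  obtain ⟨e, he, rfl, hsh⟩ := Basic.exists_eq_of_rhs_eq_some h
  exact hsol.2.1 e he n (Tm.eq_var_of_shape_eq hsh)

/-- The index of the variable reached from `x` by following equations between variables
as long as possible. -/
noncomputable def Solved.repIdx (hsol : Solved vs β) (x : (s : σ.Srt) × ℕ) : ℕ :=
  match h : β.rhs x with
  | some (.var n) => hsol.repIdx ⟨x.1, n⟩
  | _ => x.2
termination_by idx vs x
decreasing_by exact hsol.idx_lt_of_rhs_eq_var h

theorem Solved.repIdx_of_rhs_eq_var (hsol : Solved vs β) {x : (s : σ.Srt) × ℕ} {n : ℕ}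
    (h : β.rhs x = some (.var n)) : hsol.repIdx x = hsol.repIdx ⟨x.1, n⟩ := by
  rw [repIdx]
  split <;> simp_all

theorem Solved.repIdx_of_forall_rhs_ne_var (hsol : Solved vs β) {x : (s : σ.Srt) × ℕ}
    (h : ∀ n, β.rhs x ≠ some (.var n)) : hsol.repIdx x = x.2 := by
  rw [repIdx]
  split
  · next n hx => exact absurd hx (h n)
  · rfl

noncomputable def Solved.system (hsol : Solved vs β) (x : (s : σ.Srt) × ℕ) :
    σ.Node ((s : σ.Srt) × ℕ) :=
  match β.rhs ⟨x.1, hsol.repIdx x⟩ with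
  | some (.app g kids) => .app g fun i => ⟨(σ.src g).get i, kids i⟩
  | _ => .ext (preferFinite hne x.1).L

theorem Solved.system_wellSorted (hsol : Solved vs β) (hwf : β.WF) (x : (s : σ.Srt) × ℕ) :
    (hsol.system hne x).WellSorted Sigma.fst x.1 := by
  unfold system
  split
  · next g kids h => exact ⟨(Basic.sort_eq_of_rhs_eq_app hwf h).symm, fun _ => rfl⟩
  · exact ⟨_, rfl⟩

noncomputable def Solved.solution (hsol : Solved vs β) (hwf : β.WF) : σ.Val :=
  fun s n => unfold (hsol.system_wellSorted hne hwf) ⟨s, n⟩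

theorem Solved.system_of_rhs_eq_app (hsol : Solved vs β) {x : (s : σ.Srt) × ℕ} {g kids}
    (h : β.rhs x = some (.app g kids)) :
    hsol.system hne x = .app g fun i => ⟨(σ.src g).get i, kids i⟩ := by
  rw [system, hsol.repIdx_of_forall_rhs_ne_var (by simp [h]), h]

theorem Solved.system_of_rhs_eq_none (hsol : Solved vs β) {x : (s : σ.Srt) × ℕ}
    (h : β.rhs x = none) : hsol.system hne x = .ext (preferFinite hne x.1).L := by
  rw [system, hsol.repIdx_of_forall_rhs_ne_var (by simp [h]), h]

theorem Solved.solution_eq_eval (hsol : Solved vs β) (hwf : β.WF)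
    {e : (s : σ.Srt) × ℕ × σ.Tm s} (he : e ∈ β.eqs) :
    hsol.solution hne hwf e.1 e.2.1 = e.2.2.eval (hsol.solution hne hwf) := by
  have hx := Basic.rhs_of_mem (List.Nodup.of_append_left hsol.1) he
  apply Tree.ext
  cases hsh : e.2.2.shape with
  | var n =>
    rw [hsh] at hx
    rw [Tm.eq_var_of_shape_eq hsh]
    apply unfoldL_congr
    rw [system, system, hsol.repIdx_of_rhs_eq_var hx]
  | app g kids =>
    rw [hsh] at hx
    rw [Tm.eval_L_of_shape_eq hsh (hwf e he)]
    have hsys := hsol.system_of_rhs_eq_app hne hx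
    funext p
    cases p with
    | nil => exact unfoldL_of_app_nil hsys
    | cons i q => exact unfoldL_of_app_cons hsys i q

theorem Solved.solution_isFinite (hsol : Solved vs β) (hwf : β.WF) {u : (s : σ.Srt) × ℕ}
    (hu : u ∈ β.fins) :
    (hsol.solution hne hwf u.1 u.2).IsFinite := by
  have hrhs : β.rhs u = none :=
    Basic.rhs_eq_none fun hmem => List.disjoint_of_nodup_append hsol.1 hmem hu
  have hsol_u : hsol.solution hne hwf u.1 u.2 = preferFinite hne u.1 :=
    Tree.ext (unfoldL_of_ext (hsol.system_of_rhs_eq_none hne hrhs))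
  rw [hsol_u]
  exact preferFinite_isFinite hne (hsol.2.2 u hu).1

end Basic

end Sig

theorem solved_basic_satisfiable_general (σ : Sig)
    (hne : ∀ s : σ.Srt, (σ.Gens s).Nonempty)
    (vs : List ((s : σ.Srt) × ℕ)) (β : σ.Basic)
    (hwf : β.WF)
    (hsol : Sig.Solved vs β) :
    ∃ ρ : σ.Val, β.Sat ρ :=
  ⟨hsol.solution hne hwf, fun _ he => hsol.solution_eq_eval hne hwf he,
    fun _ hu => hsol.solution_isFinite hne hwf hu⟩

/-- Every solved basic formula is satisfiable in the structure
`𝒯` of trees (assuming, as always, that every sort has at least one generator). -/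
theorem solved_basic_satisfiable (σ : Sig)
    (hne : ∀ s : σ.Srt, (σ.Gens s).Nonempty)
    (vs : List ((s : σ.Srt) × ℕ)) (β : σ.Basic)
    (hnd : vs.Nodup) (hwf : β.WF) (hvs : ∀ x ∈ β.vars, x ∈ vs)
    (hsol : Sig.Solved vs β) :
    ∃ ρ : σ.Val, β.Sat ρ :=
  solved_basic_satisfiable_general σ hne vs β hwf hsol
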